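/- In a finitely-branching stochastic game with reachability objective and target set T, if for every target vertex t∈T the only outgoing edge is a self-loop t→t, then for every good vertex u (one satisfying: for all π there exists σ with P_u^{σ,π}(Reach(T)) ≥ val(u)) that belongs to player Box, there exists an optimal edge u → u' (meaning val(u') = val(u)) such that u' is also good. -/

import Mathlib

open scoped Classical

/-- A stochastic game: a directed graph with a total edge relation, vertices
partitioned among player Box, player Diamond and probabilistic vertices,
the latter carrying a positive probability distribution on outgoing edges. -/
structure SGame (V : Type*) where
  edge : V → V → Prop
  total : ∀ v, ∃ u, edge v u
  isBox : V → Prop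
  isDiamond : V → Prop
  isCirc : V → Prop
  cover : ∀ v, isBox v ∨ isDiamond v ∨ isCirc v
  disjBD : ∀ v, ¬ (isBox v ∧ isDiamond v)
  disjBC : ∀ v, ¬ (isBox v ∧ isCirc v)
  disjDC : ∀ v, ¬ (isDiamond v ∧ isCirc v)
  prob : V → V → ℝ
  prob_nonneg : ∀ v u, 0 ≤ prob v u
  prob_supp : ∀ v u, isCirc v → (0 < prob v u ↔ edge v u)
  prob_sum : ∀ v, isCirc v → ∑' u, prob v u = 1

/-- A history-dependent randomized strategy for the player owning the vertices
satisfying `own`: it assigns to every history `w` and current vertex `v` owned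
by the player a probability distribution on the outgoing edges of `v`. -/
structure SGame.Strat {V : Type*} (G : SGame V) (own : V → Prop) where
  f : List V → V → V → ℝ
  nonneg : ∀ w v u, 0 ≤ f w v u
  supp : ∀ w v u, own v → f w v u ≠ 0 → G.edge v u
  sum_one : ∀ w v, own v → ∑' u, f w v u = 1

/-- One-step transition probability of the play `G(σ,π)` given history `w`. -/
noncomputable def SGame.step {V : Type*} (G : SGame V) (σ : G.Strat G.isBox)
    (π : G.Strat G.isDiamond) (w : List V) (v u : V) : ℝ :=
  if G.isBox v then σ.f w v u else if G.isDiamond v then π.f w v u else G.prob v u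

/-- Probability of reaching the target set `T` from `v` within at most `n`
transitions in the play `G(σ,π)`, given that history `w` has elapsed. -/
noncomputable def SGame.reachN {V : Type*} (G : SGame V) (σ : G.Strat G.isBox)
    (π : G.Strat G.isDiamond) (T : Set V) : ℕ → List V → V → ℝ
  | 0, _, v => if v ∈ T then 1 else 0
  | n+1, w, v => if v ∈ T then 1 else
      ∑' u, G.step σ π w v u * SGame.reachN G σ π T n (w ++ [v]) u

/-- Probability `P_v^{σ,π}(Reach(T))` of reaching `T` from `v` in the play `G(σ,π)`. -/
noncomputable def SGame.reachP {V : Type*} (G : SGame V) (σ : G.Strat G.isBox)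
    (π : G.Strat G.isDiamond) (T : Set V) (v : V) : ℝ :=
  ⨆ n, G.reachN σ π T n [] v

/-- The (lower) value `sup_σ inf_π P_v^{σ,π}(Reach(T))` of vertex `v`. -/
noncomputable def SGame.val {V : Type*} (G : SGame V) (T : Set V) (v : V) : ℝ :=
  ⨆ σ : G.Strat G.isBox, ⨅ π : G.Strat G.isDiamond, G.reachP σ π T v

/-- The Bellman operator on functions `V → [0,1]`. -/
noncomputable def SGame.bellman {V : Type*} (G : SGame V) (T : Set V)
    (f : V → ℝ) : V → ℝ := fun v =>
  if v ∈ T then 1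
  else if G.isBox v then sSup (f '' {u | G.edge v u})
  else if G.isDiamond v then sInf (f '' {u | G.edge v u})
  else ∑' u, G.prob v u * f u


/-!
Value iteration from `0` increases to a fixed point `L` of the Bellman operator, since under
finite branching that operator commutes with pointwise limits. Box secures the `n`-th iterate by
playing greedily for the iterates, and Diamond keeps every play below `L` by playing greedily for
`L`; hence `val = L`, so `val` satisfies the Bellman equation and one Diamond strategy holds every
Box strategy down to `val`.

If no optimal successor of a good Box vertex `u ∉ T` were good, every successor `y` would have a
Diamond strategy keeping the reachability probability from `y` strictly below `val u` against all
Box strategies: a witness of non-goodness if `val y = val u`, the greedy strategy if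
`val y < val u`. Diamond combines them by following, after the first move, the strategy of the
successor that was entered. Against this combination no Box strategy reaches `val u`, because the
maximum over the finitely many successors is still below `val u`; this contradicts goodness.
-/

open Filter Topology

theorem Finset.sum_mul_le_of_forall_le {ι : Type*} {s : Finset ι} {p g : ι → ℝ} {c : ℝ}
    (hp : ∀ i ∈ s, 0 ≤ p i) (hp1 : ∑ i ∈ s, p i = 1) (hg : ∀ i ∈ s, g i ≤ c) :
    ∑ i ∈ s, p i * g i ≤ c :=
  calc ∑ i ∈ s, p i * g i ≤ ∑ i ∈ s, p i * c :=
        Finset.sum_le_sum fun i hi => mul_le_mul_of_nonneg_left (hg i hi) (hp i hi)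
    _ = c := by rw [← Finset.sum_mul, hp1, one_mul]

theorem Finset.le_sum_mul_of_forall_le {ι : Type*} {s : Finset ι} {p g : ι → ℝ} {c : ℝ}
    (hp : ∀ i ∈ s, 0 ≤ p i) (hp1 : ∑ i ∈ s, p i = 1) (hg : ∀ i ∈ s, c ≤ g i) :
    c ≤ ∑ i ∈ s, p i * g i :=
  calc c = ∑ i ∈ s, p i * c := by rw [← Finset.sum_mul, hp1, one_mul]
    _ ≤ ∑ i ∈ s, p i * g i :=
        Finset.sum_le_sum fun i hi => mul_le_mul_of_nonneg_left (hg i hi) (hp i hi)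

theorem tsum_mul_le_of_forall_le {ι : Type*} {p g : ι → ℝ} {c : ℝ} (hp : ∀ i, 0 ≤ p i)
    (hp1 : ∑' i, p i = 1) (hg0 : ∀ i, 0 ≤ g i) (hg : ∀ i, g i ≤ c) :
    ∑' i, p i * g i ≤ c := by
  have hps : Summable p := by
    by_contra h
    rw [tsum_eq_zero_of_not_summable h] at hp1
    exact zero_ne_one hp1
  have hle : ∀ i, p i * g i ≤ p i * c := fun i => mul_le_mul_of_nonneg_left (hg i) (hp i)
  calc ∑' i, p i * g i ≤ ∑' i, p i * c :=
        Summable.tsum_le_tsum hle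
          ((hps.mul_right c).of_nonneg_of_le (fun i => mul_nonneg (hp i) (hg0 i)) hle)
          (hps.mul_right c)
    _ = c := by rw [tsum_mul_right, hp1, one_mul]

namespace SGame

variable {V : Type*} (G : SGame V) (T : Set V)

section Strategies

noncomputable def detStrat (own : V → Prop) (c : List V → V → V)
    (hc : ∀ w v, G.edge v (c w v)) : G.Strat own where
  f w v u := if u = c w v then 1 else 0
  nonneg w v u := by split_ifs <;> norm_num
  supp w v u _ h := by
    split_ifs at h with hu
    · exact hu ▸ hc w v
    · exact absurd rfl h
  sum_one w v _ := tsum_ite_eq (c w v) 1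

theorem sum_detStrat_mul {own : V → Prop} {c : List V → V → V}
    (hc : ∀ w v, G.edge v (c w v)) {s : Finset V} {w : List V} {v : V} (hs : c w v ∈ s)
    (g : V → ℝ) :
    ∑ u ∈ s, (G.detStrat own c hc).f w v u * g u = g (c w v) := by
  simp [detStrat, ite_mul, hs]

instance (own : V → Prop) : Nonempty (G.Strat own) :=
  ⟨G.detStrat own (fun _ v => (G.total v).choose) fun _ v => (G.total v).choose_spec⟩

variable {G}

def Strat.shift {own : V → Prop} (ρ : G.Strat own) (a : V) : G.Strat own where
  f w := ρ.f (a :: w)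
  nonneg w := ρ.nonneg (a :: w)
  supp w := ρ.supp (a :: w)
  sum_one w := ρ.sum_one (a :: w)

/-- After the first move, play `pick y`, where `y` is the vertex entered by that move, with the
history counted from `y`. -/
def Strat.branch {own : V → Prop} (pick : V → G.Strat own) : G.Strat own where
  f w v := match w with
    | [] => (pick v).f [] v
    | _ :: w' => (pick (w'.headD v)).f w' v
  nonneg w v := by cases w <;> exact Strat.nonneg _ _ _
  supp w v := by cases w <;> exact Strat.supp _ _ _
  sum_one w v := by cases w <;> exact Strat.sum_one _ _ _

theorem Strat.shift_branch_f {own : V → Prop} (pick : V → G.Strat own) (a y : V)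
    {w : List V} {v : V} (h : [y] <+: w ++ [v]) :
    ((Strat.branch pick).shift a).f w v = (pick y).f w v := by
  cases w with
  | nil =>
    obtain rfl : y = v := by simpa using h
    rfl
  | cons b w' =>
    obtain rfl : y = b := by simpa using h
    rfl

end Strategies

abbrev FinitelyBranching : Prop := ∀ v, {u | G.edge v u}.Finite

namespace FinitelyBranching

variable {G} (hfb : G.FinitelyBranching)

noncomputable def succs (v : V) : Finset V := (hfb v).toFinset

theorem mem_succs {v u : V} : u ∈ hfb.succs v ↔ G.edge v u := (hfb v).mem_toFinset

theorem succs_nonempty (v : V) : (hfb.succs v).Nonempty :=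
  let ⟨u, hu⟩ := G.total v
  ⟨u, hfb.mem_succs.2 hu⟩

end FinitelyBranching

section Play

variable {G}

theorem step_of_isBox {σ : G.Strat G.isBox} {π : G.Strat G.isDiamond} {w : List V} {v u : V}
    (hb : G.isBox v) : G.step σ π w v u = σ.f w v u := if_pos hb

theorem step_of_isDiamond {σ : G.Strat G.isBox} {π : G.Strat G.isDiamond} {w : List V}
    {v u : V} (hd : G.isDiamond v) : G.step σ π w v u = π.f w v u := by
  rw [step, if_neg fun hb => G.disjBD v ⟨hb, hd⟩, if_pos hd]

theorem step_of_isCirc {σ : G.Strat G.isBox} {π : G.Strat G.isDiamond} {w : List V} {v u : V}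
    (hc : G.isCirc v) : G.step σ π w v u = G.prob v u := by
  rw [step, if_neg fun hb => G.disjBC v ⟨hb, hc⟩, if_neg fun hd => G.disjDC v ⟨hd, hc⟩]

variable (σ : G.Strat G.isBox) (π : G.Strat G.isDiamond)

theorem step_nonneg (w : List V) (v u : V) : 0 ≤ G.step σ π w v u := by
  unfold step; split_ifs
  exacts [σ.nonneg w v u, π.nonneg w v u, G.prob_nonneg v u]

theorem step_eq_zero_of_not_edge (w : List V) {v u : V} (h : ¬ G.edge v u) :
    G.step σ π w v u = 0 := by
  rcases G.cover v with hb | hd | hc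
  · rw [step_of_isBox hb]; exact not_not.1 (mt (σ.supp w v u hb) h)
  · rw [step_of_isDiamond hd]; exact not_not.1 (mt (π.supp w v u hd) h)
  · rw [step_of_isCirc hc]
    exact le_antisymm (not_lt.1 (mt (G.prob_supp v u hc).1 h)) (G.prob_nonneg v u)

theorem tsum_step (w : List V) (v : V) : ∑' u, G.step σ π w v u = 1 := by
  rcases G.cover v with hb | hd | hc
  · simp only [step_of_isBox hb]; exact σ.sum_one w v hb
  · simp only [step_of_isDiamond hd]; exact π.sum_one w v hd
  · simp only [step_of_isCirc hc]; exact G.prob_sum v hc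

theorem sum_step (hfb : G.FinitelyBranching) (w : List V) (v : V) :
    ∑ u ∈ hfb.succs v, G.step σ π w v u = 1 := by
  rw [← tsum_eq_sum (L := SummationFilter.unconditional V) fun u hu =>
    G.step_eq_zero_of_not_edge σ π w fun he => hu (hfb.mem_succs.2 he)]
  exact G.tsum_step σ π w v

theorem reachN_of_mem {v : V} (hv : v ∈ T) (n : ℕ) (w : List V) :
    G.reachN σ π T n w v = 1 := by
  cases n <;> simp [reachN, hv]

theorem reachN_succ_eq_sum (hfb : G.FinitelyBranching) {v : V} (hv : v ∉ T) (n : ℕ)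
    (w : List V) :
    G.reachN σ π T (n + 1) w v =
      ∑ u ∈ hfb.succs v, G.step σ π w v u * G.reachN σ π T n (w ++ [v]) u := by
  rw [reachN, if_neg hv]
  refine tsum_eq_sum fun u hu => ?_
  rw [G.step_eq_zero_of_not_edge σ π w fun he => hu (hfb.mem_succs.2 he), zero_mul]

theorem reachN_mem_Icc (n : ℕ) : ∀ w v, G.reachN σ π T n w v ∈ Set.Icc 0 1 := by
  induction n with
  | zero => intro w v; unfold reachN; split_ifs <;> norm_num
  | succ n ih =>
    intro w v
    unfold reachN
    split_ifs
    · norm_num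
    · exact ⟨tsum_nonneg fun u => mul_nonneg (G.step_nonneg σ π w v u) (ih _ u).1,
        tsum_mul_le_of_forall_le (G.step_nonneg σ π w v) (G.tsum_step σ π w v)
          (fun u => (ih _ u).1) fun u => (ih _ u).2⟩

theorem reachN_le_reachP (n : ℕ) (v : V) : G.reachN σ π T n [] v ≤ G.reachP σ π T v := by
  refine le_ciSup (f := fun m => G.reachN σ π T m [] v) ⟨1, ?_⟩ n
  rintro _ ⟨m, rfl⟩
  exact (G.reachN_mem_Icc T σ π m [] v).2

theorem reachP_nonneg (v : V) : 0 ≤ G.reachP σ π T v :=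
  (G.reachN_mem_Icc T σ π 0 [] v).1.trans (G.reachN_le_reachP T σ π 0 v)

theorem reachP_le_one (v : V) : G.reachP σ π T v ≤ 1 :=
  ciSup_le fun n => (G.reachN_mem_Icc T σ π n [] v).2

theorem reachN_shift (a : V) (n : ℕ) : ∀ w v,
    G.reachN σ π T n (a :: w) v = G.reachN (σ.shift a) (π.shift a) T n w v := by
  induction n with
  | zero => intro w v; rfl
  | succ n ih =>
    intro w v
    simp only [reachN]
    congr 1
    exact tsum_congr fun u => congrArg (_ * ·) (ih (w ++ [v]) u)

theorem reachN_congr_right {π' : G.Strat G.isDiamond} (n : ℕ) : ∀ w v,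
    (∀ w' v', w ++ [v] <+: w' ++ [v'] → π.f w' v' = π'.f w' v') →
    G.reachN σ π T n w v = G.reachN σ π' T n w v := by
  induction n with
  | zero => intro w v _; rfl
  | succ n ih =>
    intro w v h
    have hstep : G.step σ π w v = G.step σ π' w v := by
      unfold step; rw [h w v List.prefix_rfl]
    simp only [reachN, hstep]
    congr 1
    refine tsum_congr fun u => congrArg (_ * ·) (ih (w ++ [v]) u fun w' v' hw => h w' v' ?_)
    exact (List.prefix_append _ _).trans hw

end Play

section Value

theorem bddBelow_reachP (σ : G.Strat G.isBox) (v : V) :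
    BddBelow (Set.range fun π : G.Strat G.isDiamond => G.reachP σ π T v) :=
  ⟨0, by rintro _ ⟨π, rfl⟩; exact G.reachP_nonneg T σ π v⟩

theorem iInf_reachP_le_one (σ : G.Strat G.isBox) (v : V) :
    ⨅ π : G.Strat G.isDiamond, G.reachP σ π T v ≤ 1 :=
  ciInf_le_of_le (G.bddBelow_reachP T σ v) (Classical.arbitrary _) (G.reachP_le_one T σ _ v)

theorem val_le_one (v : V) : G.val T v ≤ 1 :=
  ciSup_le fun σ => G.iInf_reachP_le_one T σ v

theorem le_val {σ : G.Strat G.isBox} {v : V} {c : ℝ}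
    (h : ∀ π : G.Strat G.isDiamond, c ≤ G.reachP σ π T v) : c ≤ G.val T v := by
  refine le_ciSup_of_le ⟨1, ?_⟩ σ (le_ciInf h)
  rintro _ ⟨σ', rfl⟩
  exact G.iInf_reachP_le_one T σ' v

theorem val_le {π : G.Strat G.isDiamond} {v : V} {c : ℝ}
    (h : ∀ σ : G.Strat G.isBox, G.reachP σ π T v ≤ c) : G.val T v ≤ c :=
  ciSup_le fun σ => ciInf_le_of_le (G.bddBelow_reachP T σ v) π (h σ)

end Value

section Bellman

theorem bellman_of_mem {f : V → ℝ} {v : V} (hv : v ∈ T) : G.bellman T f v = 1 := if_pos hv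

theorem bellman_of_isBox (hfb : G.FinitelyBranching) {f : V → ℝ} {v : V} (hv : v ∉ T)
    (hb : G.isBox v) : G.bellman T f v = (hfb.succs v).sup' (hfb.succs_nonempty v) f := by
  rw [bellman, if_neg hv, if_pos hb, Finset.sup'_eq_csSup_image,
    FinitelyBranching.succs, Set.Finite.coe_toFinset]

theorem bellman_of_isDiamond (hfb : G.FinitelyBranching) {f : V → ℝ} {v : V} (hv : v ∉ T)
    (hd : G.isDiamond v) : G.bellman T f v = (hfb.succs v).inf' (hfb.succs_nonempty v) f := by
  rw [bellman, if_neg hv, if_neg fun hb => G.disjBD v ⟨hb, hd⟩, if_pos hd,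
    Finset.inf'_eq_csInf_image, FinitelyBranching.succs, Set.Finite.coe_toFinset]

theorem bellman_of_isCirc (hfb : G.FinitelyBranching) {f : V → ℝ} {v : V} (hv : v ∉ T)
    (hc : G.isCirc v) : G.bellman T f v = ∑ u ∈ hfb.succs v, G.prob v u * f u := by
  rw [bellman, if_neg hv, if_neg fun hb => G.disjBC v ⟨hb, hc⟩,
    if_neg fun hd => G.disjDC v ⟨hd, hc⟩]
  refine tsum_eq_sum fun u hu => ?_
  have hne : ¬ 0 < G.prob v u := fun h => hu (hfb.mem_succs.2 ((G.prob_supp v u hc).1 h))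
  rw [le_antisymm (not_lt.1 hne) (G.prob_nonneg v u), zero_mul]

theorem bellman_mono (hfb : G.FinitelyBranching) {f g : V → ℝ} (h : f ≤ g) :
    G.bellman T f ≤ G.bellman T g := by
  intro v
  by_cases hv : v ∈ T
  · rw [G.bellman_of_mem T hv, G.bellman_of_mem T hv]
  rcases G.cover v with hb | hd | hc
  · rw [G.bellman_of_isBox T hfb hv hb, G.bellman_of_isBox T hfb hv hb]
    exact Finset.sup'_mono_fun fun u _ => h u
  · rw [G.bellman_of_isDiamond T hfb hv hd, G.bellman_of_isDiamond T hfb hv hd]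
    exact Finset.inf'_mono_fun fun u _ => h u
  · rw [G.bellman_of_isCirc T hfb hv hc, G.bellman_of_isCirc T hfb hv hc]
    exact Finset.sum_le_sum fun u _ => mul_le_mul_of_nonneg_left (h u) (G.prob_nonneg v u)

theorem bellman_nonneg (hfb : G.FinitelyBranching) {f : V → ℝ} (hf : 0 ≤ f) :
    0 ≤ G.bellman T f := by
  intro v
  by_cases hv : v ∈ T
  · rw [G.bellman_of_mem T hv]; exact zero_le_one
  rcases G.cover v with hb | hd | hc
  · rw [G.bellman_of_isBox T hfb hv hb]
    obtain ⟨u, hu⟩ := hfb.succs_nonempty v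
    exact (hf u).trans (Finset.le_sup' f hu)
  · rw [G.bellman_of_isDiamond T hfb hv hd]
    exact Finset.le_inf' _ _ fun u _ => hf u
  · rw [G.bellman_of_isCirc T hfb hv hc]
    exact Finset.sum_nonneg fun u _ => mul_nonneg (G.prob_nonneg v u) (hf u)

theorem tendsto_bellman (hfb : G.FinitelyBranching) {ι : Type*} {l : Filter ι} {F : ι → V → ℝ}
    {f : V → ℝ} (hF : ∀ v, Tendsto (fun i => F i v) l (𝓝 (f v))) (v : V) :
    Tendsto (fun i => G.bellman T (F i) v) l (𝓝 (G.bellman T f v)) := by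
  by_cases hv : v ∈ T
  · simp only [G.bellman_of_mem T hv]; exact tendsto_const_nhds
  rcases G.cover v with hb | hd | hc
  · simp only [G.bellman_of_isBox T hfb hv hb]
    exact Tendsto.finset_sup'_nhds_apply _ fun u _ => hF u
  · simp only [G.bellman_of_isDiamond T hfb hv hd]
    exact Tendsto.finset_inf'_nhds_apply _ fun u _ => hF u
  · simp only [G.bellman_of_isCirc T hfb hv hc]
    exact tendsto_finsetSum _ fun u _ => (hF u).const_mul _

end Bellman

section ValueIteration

noncomputable def valueIter (G : SGame V) (T : Set V) : ℕ → V → ℝ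
  | 0 => 0
  | n + 1 => G.bellman T (valueIter G T n)

noncomputable def argmaxSucc (hfb : G.FinitelyBranching) (f : V → ℝ) (v : V) : V :=
  (Finset.exists_mem_eq_sup' (hfb.succs_nonempty v) f).choose

theorem argmaxSucc_mem (hfb : G.FinitelyBranching) (f : V → ℝ) (v : V) :
    G.argmaxSucc hfb f v ∈ hfb.succs v :=
  (Finset.exists_mem_eq_sup' (hfb.succs_nonempty v) f).choose_spec.1

theorem sup'_eq_argmaxSucc (hfb : G.FinitelyBranching) (f : V → ℝ) (v : V) :
    (hfb.succs v).sup' (hfb.succs_nonempty v) f = f (G.argmaxSucc hfb f v) :=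
  (Finset.exists_mem_eq_sup' (hfb.succs_nonempty v) f).choose_spec.2

noncomputable def argminSucc (hfb : G.FinitelyBranching) (f : V → ℝ) (v : V) : V :=
  (Finset.exists_mem_eq_inf' (hfb.succs_nonempty v) f).choose

theorem argminSucc_mem (hfb : G.FinitelyBranching) (f : V → ℝ) (v : V) :
    G.argminSucc hfb f v ∈ hfb.succs v :=
  (Finset.exists_mem_eq_inf' (hfb.succs_nonempty v) f).choose_spec.1

theorem inf'_eq_argminSucc (hfb : G.FinitelyBranching) (f : V → ℝ) (v : V) :
    (hfb.succs v).inf' (hfb.succs_nonempty v) f = f (G.argminSucc hfb f v) :=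
  (Finset.exists_mem_eq_inf' (hfb.succs_nonempty v) f).choose_spec.2

/-- With `n` steps to go from a history of length `m`, Box moves greedily for the iterate
`valueIter (n - m - 1)`. -/
noncomputable def greedyBox (hfb : G.FinitelyBranching) (n : ℕ) : G.Strat G.isBox :=
  G.detStrat G.isBox (fun w v => G.argmaxSucc hfb (G.valueIter T (n - w.length - 1)) v)
    fun _ v => hfb.mem_succs.1 (G.argmaxSucc_mem hfb _ v)

theorem valueIter_le_reachN_greedyBox (hfb : G.FinitelyBranching) (n : ℕ)
    (π : G.Strat G.isDiamond) (k : ℕ) : ∀ w v, k + w.length = n →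
      G.valueIter T k v ≤ G.reachN (G.greedyBox T hfb n) π T k w v := by
  induction k with
  | zero => intro w v _; exact (G.reachN_mem_Icc T _ π 0 w v).1
  | succ k ih =>
    intro w v hk
    by_cases hv : v ∈ T
    · rw [G.reachN_of_mem T _ π hv, valueIter, G.bellman_of_mem T hv]
    have hih : ∀ u, G.valueIter T k u ≤ G.reachN (G.greedyBox T hfb n) π T k (w ++ [v]) u :=
      fun u => ih _ u (by simp; omega)
    rw [G.reachN_succ_eq_sum T _ π hfb hv, valueIter]
    rcases G.cover v with hb | hd | hc
    · have hn : n - w.length - 1 = k := by omega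
      simp only [step_of_isBox hb]
      rw [G.bellman_of_isBox T hfb hv hb, G.sup'_eq_argmaxSucc hfb, greedyBox, G.sum_detStrat_mul]
      · simp only [hn]; exact hih _
      · exact G.argmaxSucc_mem hfb _ v
    · rw [G.bellman_of_isDiamond T hfb hv hd]
      exact Finset.le_sum_mul_of_forall_le (fun u _ => G.step_nonneg _ π w v u)
        (G.sum_step _ π hfb w v) fun u hu => (Finset.inf'_le _ hu).trans (hih u)
    · rw [G.bellman_of_isCirc T hfb hv hc]
      refine Finset.sum_le_sum fun u _ => ?_
      rw [step_of_isCirc hc]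
      exact mul_le_mul_of_nonneg_left (hih u) (G.prob_nonneg v u)

theorem valueIter_le_val (hfb : G.FinitelyBranching) (n : ℕ) (v : V) :
    G.valueIter T n v ≤ G.val T v :=
  G.le_val T fun π => (G.valueIter_le_reachN_greedyBox T hfb n π n [] v rfl).trans
    (G.reachN_le_reachP T _ π n v)

theorem valueIter_monotone (hfb : G.FinitelyBranching) (v : V) :
    Monotone fun n => G.valueIter T n v := by
  have h : ∀ n, G.valueIter T n ≤ G.valueIter T (n + 1) := by
    intro n
    induction n with
    | zero => exact G.bellman_nonneg T hfb le_rfl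
    | succ n ih => exact G.bellman_mono T hfb ih
  exact monotone_nat_of_le_succ fun n => h n v

theorem bddAbove_valueIter (hfb : G.FinitelyBranching) (v : V) :
    BddAbove (Set.range fun n => G.valueIter T n v) :=
  ⟨1, by rintro _ ⟨n, rfl⟩; exact (G.valueIter_le_val T hfb n v).trans (G.val_le_one T v)⟩

noncomputable def valueIterSup (G : SGame V) (T : Set V) (v : V) : ℝ := ⨆ n, G.valueIter T n v

theorem tendsto_valueIter (hfb : G.FinitelyBranching) (v : V) :
    Tendsto (fun n => G.valueIter T n v) atTop (𝓝 (G.valueIterSup T v)) :=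
  tendsto_atTop_ciSup (G.valueIter_monotone T hfb v) (G.bddAbove_valueIter T hfb v)

theorem bellman_valueIterSup (hfb : G.FinitelyBranching) :
    G.bellman T (G.valueIterSup T) = G.valueIterSup T :=
  funext fun v => tendsto_nhds_unique (G.tendsto_bellman T hfb (G.tendsto_valueIter T hfb) v)
    ((tendsto_add_atTop_iff_nat 1).2 (G.tendsto_valueIter T hfb v))

theorem valueIterSup_of_mem (hfb : G.FinitelyBranching) {v : V} (hv : v ∈ T) :
    G.valueIterSup T v = 1 := by
  rw [← G.bellman_valueIterSup T hfb, G.bellman_of_mem T hv]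

theorem valueIterSup_nonneg (hfb : G.FinitelyBranching) (v : V) : 0 ≤ G.valueIterSup T v :=
  le_ciSup_of_le (G.bddAbove_valueIter T hfb v) 0 le_rfl

noncomputable def greedyDiamond (hfb : G.FinitelyBranching) : G.Strat G.isDiamond :=
  G.detStrat G.isDiamond (fun _ v => G.argminSucc hfb (G.valueIterSup T) v)
    fun _ v => hfb.mem_succs.1 (G.argminSucc_mem hfb _ v)

theorem reachN_greedyDiamond_le (hfb : G.FinitelyBranching) (σ : G.Strat G.isBox) (n : ℕ) :
    ∀ w v, G.reachN σ (G.greedyDiamond T hfb) T n w v ≤ G.valueIterSup T v := by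
  induction n with
  | zero =>
    intro w v
    by_cases hv : v ∈ T
    · rw [G.reachN_of_mem T σ _ hv, G.valueIterSup_of_mem T hfb hv]
    · simp only [reachN, if_neg hv]; exact G.valueIterSup_nonneg T hfb v
  | succ n ih =>
    intro w v
    by_cases hv : v ∈ T
    · rw [G.reachN_of_mem T σ _ hv, G.valueIterSup_of_mem T hfb hv]
    rw [G.reachN_succ_eq_sum T σ _ hfb hv, ← G.bellman_valueIterSup T hfb]
    rcases G.cover v with hb | hd | hc
    · rw [G.bellman_of_isBox T hfb hv hb]
      exact Finset.sum_mul_le_of_forall_le (fun u _ => G.step_nonneg σ _ w v u)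
        (G.sum_step σ _ hfb w v) fun u hu => (ih _ u).trans (Finset.le_sup' _ hu)
    · simp only [step_of_isDiamond hd]
      rw [G.bellman_of_isDiamond T hfb hv hd, G.inf'_eq_argminSucc hfb, greedyDiamond,
        G.sum_detStrat_mul]
      · exact ih _ _
      · exact G.argminSucc_mem hfb _ v
    · rw [G.bellman_of_isCirc T hfb hv hc]
      refine Finset.sum_le_sum fun u _ => ?_
      rw [step_of_isCirc hc]
      exact mul_le_mul_of_nonneg_left (ih _ u) (G.prob_nonneg v u)

theorem val_eq_valueIterSup (hfb : G.FinitelyBranching) : G.val T = G.valueIterSup T :=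
  funext fun v => le_antisymm
    (G.val_le T fun σ => ciSup_le fun n => G.reachN_greedyDiamond_le T hfb σ n [] v)
    (ciSup_le fun n => G.valueIter_le_val T hfb n v)

theorem reachP_greedyDiamond_le_val (hfb : G.FinitelyBranching) (σ : G.Strat G.isBox) (v : V) :
    G.reachP σ (G.greedyDiamond T hfb) T v ≤ G.val T v := by
  rw [G.val_eq_valueIterSup T hfb]
  exact ciSup_le fun n => G.reachN_greedyDiamond_le T hfb σ n [] v

theorem val_le_val_of_isBox (hfb : G.FinitelyBranching) {v u : V} (hv : v ∉ T) (hb : G.isBox v)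
    (he : G.edge v u) : G.val T u ≤ G.val T v := by
  rw [G.val_eq_valueIterSup T hfb]
  calc G.valueIterSup T u ≤ (hfb.succs v).sup' (hfb.succs_nonempty v) (G.valueIterSup T) :=
        Finset.le_sup' _ (hfb.mem_succs.2 he)
    _ = G.valueIterSup T v := by
        rw [← G.bellman_of_isBox T hfb hv hb, G.bellman_valueIterSup T hfb]

end ValueIteration

section Goodness

def IsGood (v : V) : Prop :=
  ∀ π : G.Strat G.isDiamond, ∃ σ : G.Strat G.isBox, G.val T v ≤ G.reachP σ π T v

theorem reachP_branch_le (hfb : G.FinitelyBranching) {u : V} (hu : u ∉ T)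
    (σ : G.Strat G.isBox) (pick : V → G.Strat G.isDiamond) :
    G.reachP σ (Strat.branch pick) T u ≤
      (hfb.succs u).sup' (hfb.succs_nonempty u) fun y => G.reachP (σ.shift u) (pick y) T y := by
  set B := (hfb.succs u).sup' (hfb.succs_nonempty u) fun y => G.reachP (σ.shift u) (pick y) T y
  have hsucc : ∀ y ∈ hfb.succs u, ∀ n, G.reachN σ (Strat.branch pick) T n [u] y ≤ B := by
    intro y hy n
    rw [G.reachN_shift T σ _ u n [] y,
      G.reachN_congr_right T _ _ n [] y fun w v h => Strat.shift_branch_f pick u y h]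
    exact (G.reachN_le_reachP T _ _ n y).trans
      (Finset.le_sup' (fun y => G.reachP (σ.shift u) (pick y) T y) hy)
  refine ciSup_le fun n => ?_
  cases n with
  | zero =>
    obtain ⟨y, hy⟩ := hfb.succs_nonempty u
    simp only [reachN, if_neg hu]
    exact (G.reachP_nonneg T _ _ y).trans
      (Finset.le_sup' (fun y => G.reachP (σ.shift u) (pick y) T y) hy)
  | succ n =>
    rw [G.reachN_succ_eq_sum T σ _ hfb hu]
    exact Finset.sum_mul_le_of_forall_le (fun y _ => G.step_nonneg σ _ [] u y)
      (G.sum_step σ _ hfb [] u) fun y hy => hsucc y hy n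

theorem exists_forall_reachP_lt_of_forall_edge (hfb : G.FinitelyBranching) {u : V} (hu : u ∉ T)
    {c : ℝ} (h : ∀ y, G.edge u y → ∃ π : G.Strat G.isDiamond, ∀ σ, G.reachP σ π T y < c) :
    ∃ π : G.Strat G.isDiamond, ∀ σ, G.reachP σ π T u < c := by
  choose! pick hpick using h
  refine ⟨Strat.branch pick, fun σ => (G.reachP_branch_le T hfb hu σ pick).trans_lt ?_⟩
  exact (Finset.sup'_lt_iff _).2 fun y hy => hpick y (hfb.mem_succs.1 hy) (σ.shift u)

theorem exists_forall_reachP_lt_of_edge (hfb : G.FinitelyBranching) {u y : V} (hu : u ∉ T)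
    (hb : G.isBox u) (he : G.edge u y) (hy : G.val T y = G.val T u → ¬ G.IsGood T y) :
    ∃ π : G.Strat G.isDiamond, ∀ σ, G.reachP σ π T y < G.val T u := by
  rcases (G.val_le_val_of_isBox T hfb hu hb he).lt_or_eq with hlt | heq
  · exact ⟨G.greedyDiamond T hfb, fun σ =>
      (G.reachP_greedyDiamond_le_val T hfb σ y).trans_lt hlt⟩
  · obtain ⟨π, hπ⟩ := not_forall.1 (hy heq)
    exact ⟨π, fun σ => heq ▸ not_le.1 (not_exists.1 hπ σ)⟩

end Goodness

end SGame

/-- In a finitely-branching stochastic game in which every target vertex has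
only the self-loop as outgoing edge, every good vertex of player Box has an
optimal outgoing edge leading to a good vertex. -/
theorem good_box_vertex_has_good_optimal_successor {V : Type*} (G : SGame V)
    (T : Set V) (hfb : ∀ v, {u | G.edge v u}.Finite)
    (hT : ∀ t ∈ T, ∀ u, G.edge t u ↔ u = t)
    (u : V) (hu : G.isBox u)
    (hgood : ∀ π : G.Strat G.isDiamond, ∃ σ : G.Strat G.isBox,
      G.val T u ≤ G.reachP σ π T u) :
    ∃ u', G.edge u u' ∧ G.val T u' = G.val T u ∧
      ∀ π : G.Strat G.isDiamond, ∃ σ : G.Strat G.isBox,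
        G.val T u' ≤ G.reachP σ π T u' := by
  by_cases huT : u ∈ T
  · exact ⟨u, (hT u huT u).2 rfl, rfl, hgood⟩
  by_contra hnone
  obtain ⟨π, hπ⟩ := G.exists_forall_reachP_lt_of_forall_edge T hfb huT fun y he =>
    G.exists_forall_reachP_lt_of_edge T hfb huT hu he fun hval hy => hnone ⟨y, he, hval, hy⟩
  obtain ⟨σ, hσ⟩ := hgood π
  exact (hπ σ).not_ge hσ
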